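/- Let A₁, A₂ be invertible 2×2 real matrices with ‖A₁‖ < 1 and ‖A₂‖ < 1, let q > 1 and p ∈ (0,1). Then the function s ↦ R_q(A₁, A₂, p, s) is strictly increasing on (0, +∞); indeed, writing θ := max{‖A₁‖, ‖A₂‖}, for all s, t > 0 one has R_q(A₁, A₂, p, s+t) ≥ (1−q)·t·log θ + R_q(A₁, A₂, p, s) > R_q(A₁, A₂, p, s). -/

import Mathlib

open MeasureTheory Filter Topology

noncomputable section

/-- The operator norm of a `d × d` real matrix induced by the Euclidean norm on `ℝ^d`. -/
noncomputable def opNorm {d : ℕ} (A : Matrix (Fin d) (Fin d) ℝ) : ℝ :=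
  ‖Matrix.toEuclideanCLM (𝕜 := ℝ) (n := Fin d) A‖

/-- The singular values of a `d × d` real matrix, in decreasing order:
`singularValues A j` is `σ_{j+1}(A)`, the `(j+1)`-st largest singular value. -/
noncomputable def singularValues {d : ℕ} (A : Matrix (Fin d) (Fin d) ℝ) : Fin d → ℝ :=
  fun j =>
    (fun i => Real.sqrt ((Matrix.isHermitian_conjTranspose_mul_self A).eigenvalues i))
      (Tuple.sort (fun i => Real.sqrt ((Matrix.isHermitian_conjTranspose_mul_self A).eigenvalues i))
        (Fin.rev j))

/-- The singular value function `φ^s(A)`. -/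
noncomputable def svf {d : ℕ} (s : ℝ) (A : Matrix (Fin d) (Fin d) ℝ) : ℝ :=
  if (d : ℝ) ≤ s then |A.det| ^ (s / d)
  else ∏ i : Fin d,
    if (i : ℕ) < ⌊s⌋₊ then singularValues A i
    else if (i : ℕ) = ⌊s⌋₊ then singularValues A i ^ (s - (⌊s⌋₊ : ℝ))
    else 1

/-- The product `A_{w 0} ⋯ A_{w (n-1)}` of matrices along the word `w`. -/
noncomputable def wordProd {d n : ℕ} (A : Fin 2 → Matrix (Fin d) (Fin d) ℝ)
    (w : Fin n → Fin 2) : Matrix (Fin d) (Fin d) ℝ :=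
  (List.ofFn fun j => A (w j)).prod

/-- The probability vector `(p, 1-p)`. -/
noncomputable def pvec (p : ℝ) : Fin 2 → ℝ := ![p, 1 - p]

/-- `Σ_{i₁,…,i_n ∈ {1,2}} φ^s(A_{i₁}⋯A_{i_n})^{1−q} p_{i₁}^q ⋯ p_{i_n}^q`. -/
noncomputable def Zsum (A : Fin 2 → Matrix (Fin 2) (Fin 2) ℝ) (p q s : ℝ) (n : ℕ) : ℝ :=
  ∑ w : Fin n → Fin 2,
    svf s (wordProd A w) ^ (1 - q) * ∏ j : Fin n, pvec p (w j) ^ q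

/-- `𝔯_q(A₁, A₂, p)`. -/
noncomputable def rqDim (A : Fin 2 → Matrix (Fin 2) (Fin 2) ℝ) (p q : ℝ) : ℝ :=
  sSup {s : ℝ | 0 < s ∧ Summable (fun n : ℕ => Zsum A p q s (n + 1))}

/-- `R_q(A₁, A₂, p, s)`. -/
noncomputable def Rq (A : Fin 2 → Matrix (Fin 2) (Fin 2) ℝ) (p q s : ℝ) : ℝ :=
  limUnder atTop (fun n : ℕ => (1 / (n : ℝ)) * Real.log (Zsum A p q s n))

/-- The minimum over all words of length `n` of the norm of the corresponding product. -/
noncomputable def minNormProd (A : Fin 2 → Matrix (Fin 2) (Fin 2) ℝ) (n : ℕ) : ℝ :=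
  ⨅ w : Fin n → Fin 2, opNorm (wordProd A w)

/-- The lower spectral radius `ϱ̲(A₁, A₂)`. -/
noncomputable def lsr (A : Fin 2 → Matrix (Fin 2) (Fin 2) ℝ) : ℝ :=
  limUnder atTop (fun n : ℕ => minNormProd A n ^ (1 / (n : ℝ)))

/-- Pairs of invertible `2 × 2` matrices of operator norm less than one. -/
def validPair : Set (Matrix (Fin 2) (Fin 2) ℝ × Matrix (Fin 2) (Fin 2) ℝ) :=
  {B | IsUnit B.1 ∧ IsUnit B.2 ∧ opNorm B.1 < 1 ∧ opNorm B.2 < 1}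

/-- Rotation of `ℝ²` about the origin through angle `θ`. -/
noncomputable def rot (θ : ℝ) : Matrix (Fin 2) (Fin 2) ℝ :=
  !![Real.cos θ, -Real.sin θ; Real.sin θ, Real.cos θ]

/-- `(A₁, A₂)` is `(c, ε, λ)`-resistant. -/
def ResistantWith (c ε lam : ℝ) (A : Fin 2 → Matrix (Fin 2) (Fin 2) ℝ) : Prop :=
  ∀ n : ℕ, 1 ≤ n → ∀ w : Fin n → Fin 2,
    ((Finset.univ.filter fun j => w j = 1).card : ℝ) ≤ ε * n →
    c * lam ^ n ≤ opNorm (wordProd A w)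

/-- `(A₁, A₂)` is resistant. -/
def Resistant (A : Fin 2 → Matrix (Fin 2) (Fin 2) ℝ) : Prop :=
  ∃ c > (0:ℝ), ∃ ε > (0:ℝ), ∃ lam > (1:ℝ), ResistantWith c ε lam A

/-- `ℋ`: `2 × 2` real matrices of determinant one with two unequal real eigenvalues. -/
def Hset : Set (Matrix (Fin 2) (Fin 2) ℝ) :=
  {H | H.det = 1 ∧ ∃ a b : ℝ, a ≠ b ∧ H.charpoly.IsRoot a ∧ H.charpoly.IsRoot b}

/-- `ℰ`: `2 × 2` real matrices of determinant one with non-real eigenvalues. -/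
def Eset : Set (Matrix (Fin 2) (Fin 2) ℝ) :=
  {R | R.det = 1 ∧ ∀ x : ℝ, ¬ R.charpoly.IsRoot x}


/-- Abbreviation for the space of `2 × 2` real matrices. -/
abbrev Mat2 := Matrix (Fin 2) (Fin 2) ℝ

/-!
For `2 × 2` matrices `φ^s(A) = ‖A‖ ^ (s - 2 e(s)) * |det A| ^ e(s)` with an explicit
nondecreasing exponent `0 ≤ e(s) ≤ s / 2`. Hence `φ^s` is submultiplicative, bounded below by
`|det A| ^ (s / 2)`, and `φ^(s+t)(A) ≤ φ^s(A) ‖A‖ ^ t`. As `1 - q < 0`, the first two facts make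
the sums `Zsum` supermultiplicative and at most exponential, so by Fekete's lemma `R_q` is a
genuine limit. The third gives `Zsum (s + t) n ≥ θ ^ (n t (1 - q)) Zsum s n`, whence the
inequality after taking `(1 / n) log`, and `θ < 1` makes the gain `(1 - q) t log θ` positive.
-/

section

open Matrix
open scoped Matrix.Norms.L2Operator

theorem Tuple.le_sort_last {α : Type*} [LinearOrder α] {n : ℕ} (f : Fin (n + 1) → α)
    (i : Fin (n + 1)) : f i ≤ f (Tuple.sort f (Fin.last n)) := by
  obtain ⟨j, rfl⟩ := (Tuple.sort f).surjective i
  exact Tuple.monotone_sort f (Fin.le_last j)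

theorem Matrix.IsHermitian.l2_opNorm_eq_norm_eigenvalues {𝕜 n : Type*} [RCLike 𝕜] [Fintype n]
    [DecidableEq n] {M : Matrix n n 𝕜} (hM : M.IsHermitian) : ‖M‖ = ‖hM.eigenvalues‖ := by
  conv_lhs => rw [hM.spectral_theorem, Unitary.conjStarAlgAut_apply]
  rw [mul_assoc, CStarRing.norm_coe_unitary_mul,
    CStarRing.norm_mul_mem_unitary _ (Unitary.star_mem hM.eigenvectorUnitary.2), l2_opNorm_diagonal]
  simp [Pi.norm_def]

theorem opNorm_eq_norm {d : ℕ} (A : Matrix (Fin d) (Fin d) ℝ) : opNorm A = ‖A‖ := rfl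

theorem opNorm_pos {d : ℕ} {A : Matrix (Fin d) (Fin d) ℝ} (hA : A ≠ 0) : 0 < opNorm A := by
  rw [opNorm_eq_norm]; exact norm_pos_iff.2 hA

theorem singularValues_nonneg {d : ℕ} (A : Matrix (Fin d) (Fin d) ℝ) (j : Fin d) :
    0 ≤ singularValues A j :=
  Real.sqrt_nonneg _

theorem singularValues_antitone {d : ℕ} (A : Matrix (Fin d) (Fin d) ℝ) :
    Antitone (singularValues A) := fun _ _ h =>
  Tuple.monotone_sort (fun i => Real.sqrt ((isHermitian_conjTranspose_mul_self A).eigenvalues i))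
    (Fin.rev_le_rev.2 h)

theorem prod_singularValues {d : ℕ} (A : Matrix (Fin d) (Fin d) ℝ) :
    ∏ j, singularValues A j = |A.det| := by
  set hM := isHermitian_conjTranspose_mul_self A
  have hperm : ∏ j, singularValues A j = ∏ i, Real.sqrt (hM.eigenvalues i) :=
    (Fin.revPerm.trans (Tuple.sort _)).prod_comp (fun i => Real.sqrt (hM.eigenvalues i))
  rw [hperm, ← Real.sqrt_prod _ fun i _ => eigenvalues_conjTranspose_mul_self_nonneg A i]
  have : ∏ i, hM.eigenvalues i = A.det ^ 2 := by
    have := hM.det_eq_prod_eigenvalues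
    simp only [RCLike.ofReal_real_eq_id, id] at this
    rw [← this, det_mul, det_conjTranspose]; simp [sq]
  rw [this, Real.sqrt_sq_eq_abs]

theorem opNorm_eq_singularValues_zero {n : ℕ} (A : Matrix (Fin (n + 1)) (Fin (n + 1)) ℝ) :
    opNorm A = singularValues A 0 := by
  set hM := isHermitian_conjTranspose_mul_self A
  set k := Tuple.sort (fun i => Real.sqrt (hM.eigenvalues i)) (Fin.last n)
  have hk : singularValues A 0 = Real.sqrt (hM.eigenvalues k) := rfl
  have heig : ‖hM.eigenvalues‖ = hM.eigenvalues k := by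
    refine le_antisymm ((pi_norm_le_iff_of_nonneg
      (eigenvalues_conjTranspose_mul_self_nonneg A k)).2 fun i => ?_) ?_
    · rw [Real.norm_of_nonneg (eigenvalues_conjTranspose_mul_self_nonneg A i)]
      exact (Real.sqrt_le_sqrt_iff (eigenvalues_conjTranspose_mul_self_nonneg A k)).1
        (Tuple.le_sort_last (fun i => Real.sqrt (hM.eigenvalues i)) i)
    · exact (le_abs_self _).trans (norm_le_pi_norm hM.eigenvalues k)
  rw [hk, ← heig, ← hM.l2_opNorm_eq_norm_eigenvalues, l2_opNorm_conjTranspose_mul_self,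
    Real.sqrt_mul_self (norm_nonneg _), opNorm_eq_norm]

theorem abs_det_le_opNorm_sq (A : Mat2) : |A.det| ≤ opNorm A ^ 2 := by
  rw [← prod_singularValues, Fin.prod_univ_two, opNorm_eq_singularValues_zero, sq]
  exact mul_le_mul_of_nonneg_left (singularValues_antitone A (Fin.zero_le 1))
    (singularValues_nonneg A 0)

/-- The exponent of `|det A|` in `φ^s(A)` for `2 × 2` matrices (see `svf_eq`): it is `0` for
`s ≤ 1`, `s - 1` for `1 ≤ s ≤ 2` and `s / 2` for `s ≥ 2`. -/
def detExponent (s : ℝ) : ℝ := max 0 (min (s - 1) (s / 2))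

theorem detExponent_nonneg (s : ℝ) : 0 ≤ detExponent s := le_max_left _ _

theorem detExponent_monotone : Monotone detExponent := fun _ _ h =>
  max_le_max le_rfl (min_le_min (by linarith) (by linarith))

theorem two_mul_detExponent_le {s : ℝ} (hs : 0 ≤ s) : 2 * detExponent s ≤ s := by
  have := min_le_right (s - 1) (s / 2)
  unfold detExponent
  rcases max_cases 0 (min (s - 1) (s / 2)) with ⟨h, -⟩ | ⟨h, -⟩ <;> rw [h] <;> linarith

theorem svf_eq (A : Mat2) (s : ℝ) :
    svf s A = opNorm A ^ (s - 2 * detExponent s) * |A.det| ^ detExponent s := by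
  rcases lt_or_ge s 1 with h1 | h1
  · have he : detExponent s = 0 := max_eq_left (min_le_of_left_le (by linarith))
    have hfl : ⌊s⌋₊ = 0 := Nat.floor_eq_zero.2 h1
    simp [svf, he, hfl, opNorm_eq_singularValues_zero, show ¬ (2 : ℝ) ≤ s by linarith]
  rcases lt_or_ge s 2 with h2 | h2
  · have he : detExponent s = s - 1 := by
      rw [detExponent, min_eq_left (by linarith), max_eq_right (by linarith)]
    have hfl : ⌊s⌋₊ = 1 := by
      rw [Nat.floor_eq_iff (by linarith)]; constructor <;> push_cast <;> linarith
    have hsvf : svf s A = singularValues A 0 * singularValues A 1 ^ (s - 1) := by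
      simp only [svf, hfl, Fin.prod_univ_two, Nat.cast_ofNat, if_neg (not_le.2 h2)]
      norm_num
    have hσ0 := singularValues_nonneg A 0
    rw [hsvf, he, ← prod_singularValues, Fin.prod_univ_two, opNorm_eq_singularValues_zero,
      Real.mul_rpow hσ0 (singularValues_nonneg A 1), ← mul_assoc,
      ← Real.rpow_add' hσ0 (by ring_nf; norm_num), show s - 2 * (s - 1) + (s - 1) = 1 by ring,
      Real.rpow_one]
  · have he : detExponent s = s / 2 := by
      rw [detExponent, min_eq_right (by linarith), max_eq_right (by linarith)]
    simp [svf, he, h2, show s - 2 * (s / 2) = 0 by ring]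

theorem abs_det_div_opNorm_sq_le_one (A : Mat2) : |A.det| / opNorm A ^ 2 ≤ 1 :=
  div_le_one_of_le₀ (abs_det_le_opNorm_sq A) (sq_nonneg _)

theorem svf_pos {A : Mat2} (hA : IsUnit A) (s : ℝ) : 0 < svf s A := by
  have hdet : 0 < |A.det| := abs_pos.2 ((isUnit_iff_isUnit_det A).1 hA).ne_zero
  rw [svf_eq]
  exact mul_pos (Real.rpow_pos_of_pos (opNorm_pos hA.ne_zero) _) (Real.rpow_pos_of_pos hdet _)

theorem svf_mul_le {s : ℝ} (hs : 0 ≤ s) (A B : Mat2) : svf s (A * B) ≤ svf s A * svf s B := by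
  have hc : 0 ≤ s - 2 * detExponent s := by linarith [two_mul_detExponent_le hs]
  simp only [svf_eq, opNorm_eq_norm, det_mul, abs_mul]
  rw [Real.mul_rpow (abs_nonneg _) (abs_nonneg _)]
  calc ‖A * B‖ ^ (s - 2 * detExponent s) * (|A.det| ^ detExponent s * |B.det| ^ detExponent s)
      ≤ (‖A‖ * ‖B‖) ^ (s - 2 * detExponent s) *
          (|A.det| ^ detExponent s * |B.det| ^ detExponent s) := by
        gcongr
        exact norm_mul_le A B
    _ = _ := by rw [Real.mul_rpow (norm_nonneg _) (norm_nonneg _)]; ring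

theorem svf_eq_opNorm_rpow_mul {A : Mat2} (hA : A ≠ 0) (s : ℝ) :
    svf s A = opNorm A ^ s * (|A.det| / opNorm A ^ 2) ^ detExponent s := by
  have hA : 0 < opNorm A := opNorm_pos hA
  rw [svf_eq, Real.div_rpow (abs_nonneg _) (by positivity), ← Real.rpow_natCast,
    ← Real.rpow_mul hA.le, Real.rpow_sub hA]
  push_cast
  ring

theorem svf_add_le {A : Mat2} (hA : A ≠ 0) (s : ℝ) {t : ℝ} (ht : 0 ≤ t) :
    svf (s + t) A ≤ svf s A * opNorm A ^ t := by
  have hA' : 0 < opNorm A := opNorm_pos hA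
  rw [svf_eq_opNorm_rpow_mul hA, svf_eq_opNorm_rpow_mul hA, Real.rpow_add hA', mul_right_comm]
  gcongr opNorm A ^ s * ?_ * opNorm A ^ t
  exact Real.rpow_le_rpow_of_exponent_ge' (by positivity) (abs_det_div_opNorm_sq_le_one A)
    (detExponent_nonneg s) (detExponent_monotone (show s ≤ s + t by linarith))

theorem abs_det_rpow_le_svf {A : Mat2} (hA : A ≠ 0) {s : ℝ} (hs : 0 ≤ s) :
    |A.det| ^ (s / 2) ≤ svf s A := by
  have hA' : 0 < opNorm A := opNorm_pos hA
  calc |A.det| ^ (s / 2) = opNorm A ^ s * (|A.det| / opNorm A ^ 2) ^ (s / 2) := by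
        rw [Real.div_rpow (abs_nonneg _) (by positivity), ← Real.rpow_natCast,
          ← Real.rpow_mul hA'.le]
        push_cast
        field_simp
    _ ≤ svf s A := by
        rw [svf_eq_opNorm_rpow_mul hA]
        refine mul_le_mul_of_nonneg_left ?_ (Real.rpow_nonneg hA'.le _)
        exact Real.rpow_le_rpow_of_exponent_ge' (by positivity) (abs_det_div_opNorm_sq_le_one A)
          (detExponent_nonneg s)
          (show detExponent s ≤ s / 2 by linarith [two_mul_detExponent_le hs])

section Words

variable {d : ℕ} (A : Fin 2 → Matrix (Fin d) (Fin d) ℝ)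

theorem wordProd_append {m n : ℕ} (u : Fin m → Fin 2) (v : Fin n → Fin 2) :
    wordProd A (Fin.append u v) = wordProd A u * wordProd A v := by
  simp [wordProd, List.ofFn_add, Fin.append_right]

theorem det_wordProd {n : ℕ} (w : Fin n → Fin 2) :
    (wordProd A w).det = ∏ j, (A (w j)).det := by
  change detMonoidHom _ = _
  rw [wordProd, map_list_prod, List.map_ofFn, List.prod_ofFn]
  rfl

variable {A}

theorem isUnit_wordProd (hA : ∀ i, IsUnit (A i)) {n : ℕ} (w : Fin n → Fin 2) :
    IsUnit (wordProd A w) :=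
  List.prod_isUnit fun B hB => by
    obtain ⟨j, rfl⟩ := List.mem_ofFn.1 hB
    exact hA (w j)

end Words

theorem opNorm_wordProd_le {A : Fin 2 → Mat2} {θ : ℝ} (hθ : ∀ i, opNorm (A i) ≤ θ) {n : ℕ}
    (w : Fin n → Fin 2) : opNorm (wordProd A w) ≤ θ ^ n := by
  calc opNorm (wordProd A w) ≤ ∏ j, opNorm (A (w j)) := by
        rw [opNorm_eq_norm, wordProd]
        refine (List.norm_prod_le _).trans_eq ?_
        rw [List.map_ofFn, List.prod_ofFn]
        rfl
    _ ≤ θ ^ n := by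
        refine (Finset.prod_le_prod (fun j _ => norm_nonneg _) fun j _ => hθ (w j)).trans_eq ?_
        simp

theorem exists_tendsto_log_div_of_supermultiplicative {Z : ℕ → ℝ} (hpos : ∀ n, 0 < Z n)
    (hmul : ∀ m n, Z m * Z n ≤ Z (m + n)) {C : ℝ} (hC : ∀ n, Z n ≤ C ^ n) :
    ∃ L, Tendsto (fun n : ℕ => 1 / (n : ℝ) * Real.log (Z n)) atTop (𝓝 L) := by
  have hsub : Subadditive fun n => -Real.log (Z n) := fun m n => by
    have := Real.log_le_log (mul_pos (hpos m) (hpos n)) (hmul m n)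
    rw [Real.log_mul (hpos m).ne' (hpos n).ne'] at this
    linarith
  have hC0 : 0 < C := by simpa using (hpos 1).trans_le (hC 1)
  have hbdd : BddBelow (Set.range fun n : ℕ => -Real.log (Z n) / n) := by
    refine ⟨min 0 (-Real.log C), ?_⟩
    rintro _ ⟨n, rfl⟩
    rcases Nat.eq_zero_or_pos n with rfl | hn
    · simp
    have hlog : Real.log (Z n) ≤ n * Real.log C := by
      rw [← Real.log_pow]
      exact Real.log_le_log (hpos n) (hC n)
    refine (min_le_right _ _).trans ?_
    rw [le_div_iff₀ (by positivity)]
    linarith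
  refine ⟨-hsub.lim, (hsub.tendsto_lim hbdd).neg.congr fun n => ?_⟩
  ring

section Zsum

variable {A : Fin 2 → Mat2} {p q s : ℝ}

theorem pvec_pos (hp : p ∈ Set.Ioo (0 : ℝ) 1) (i : Fin 2) : 0 < pvec p i := by
  fin_cases i
  · exact hp.1
  · exact sub_pos.2 hp.2

theorem prod_pvec_rpow_pos (hp : p ∈ Set.Ioo (0 : ℝ) 1) {n : ℕ} (w : Fin n → Fin 2) :
    0 < ∏ j, pvec p (w j) ^ q :=
  Finset.prod_pos fun j _ => Real.rpow_pos_of_pos (pvec_pos hp (w j)) q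

theorem Zsum_pos (hA : ∀ i, IsUnit (A i)) (hp : p ∈ Set.Ioo (0 : ℝ) 1) (n : ℕ) :
    0 < Zsum A p q s n :=
  Finset.sum_pos (fun w _ => mul_pos (Real.rpow_pos_of_pos (svf_pos (isUnit_wordProd hA w) s) _)
    (prod_pvec_rpow_pos hp w)) Finset.univ_nonempty

theorem Zsum_mul_le_Zsum_add (hA : ∀ i, IsUnit (A i)) (hp : p ∈ Set.Ioo (0 : ℝ) 1) (hq : 1 ≤ q)
    (hs : 0 ≤ s) (m n : ℕ) : Zsum A p q s m * Zsum A p q s n ≤ Zsum A p q s (m + n) := by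
  rw [Zsum, Zsum, Zsum, Finset.sum_mul_sum, ← Fintype.sum_prod_type',
    ← (Fin.appendEquiv m n).sum_comp]
  refine Finset.sum_le_sum fun ⟨u, v⟩ _ => ?_
  have hweight : ∏ j, pvec p (Fin.append u v j) ^ q
      = (∏ j, pvec p (u j) ^ q) * ∏ j, pvec p (v j) ^ q := by
    rw [Fin.prod_univ_add]
    simp only [Fin.append_left, Fin.append_right]
  have hu := svf_pos (isUnit_wordProd hA u) s
  have hv := svf_pos (isUnit_wordProd hA v) s
  have hsvf : (svf s (wordProd A u) * svf s (wordProd A v)) ^ (1 - q)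
      ≤ svf s (wordProd A u * wordProd A v) ^ (1 - q) :=
    Real.rpow_le_rpow_of_nonpos (svf_pos ((isUnit_wordProd hA u).mul (isUnit_wordProd hA v)) s)
      (svf_mul_le hs _ _) (by linarith)
  rw [Real.mul_rpow hu.le hv.le] at hsvf
  change _ ≤ svf s (wordProd A (Fin.append u v)) ^ (1 - q) * ∏ j, pvec p (Fin.append u v j) ^ q
  rw [wordProd_append, hweight]
  calc svf s (wordProd A u) ^ (1 - q) * (∏ j, pvec p (u j) ^ q) *
        (svf s (wordProd A v) ^ (1 - q) * ∏ j, pvec p (v j) ^ q)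
      = svf s (wordProd A u) ^ (1 - q) * svf s (wordProd A v) ^ (1 - q) *
          ((∏ j, pvec p (u j) ^ q) * ∏ j, pvec p (v j) ^ q) := by ring
    _ ≤ _ := mul_le_mul_of_nonneg_right hsvf
          (mul_pos (prod_pvec_rpow_pos hp u) (prod_pvec_rpow_pos hp v)).le

theorem Zsum_le_pow (hA : ∀ i, IsUnit (A i)) (hp : p ∈ Set.Ioo (0 : ℝ) 1) (hq : 1 ≤ q)
    (hs : 0 ≤ s) (n : ℕ) :
    Zsum A p q s n ≤ (∑ i, |(A i).det| ^ (s / 2 * (1 - q)) * pvec p i ^ q) ^ n := by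
  rw [Fintype.sum_pow, Zsum]
  refine Finset.sum_le_sum fun w _ => ?_
  have hW := isUnit_wordProd hA w
  have hdet : 0 < |(wordProd A w).det| :=
    abs_pos.2 ((isUnit_iff_isUnit_det _).1 hW).ne_zero
  have hsvf : svf s (wordProd A w) ^ (1 - q) ≤ ∏ j, |(A (w j)).det| ^ (s / 2 * (1 - q)) := by
    calc svf s (wordProd A w) ^ (1 - q) ≤ (|(wordProd A w).det| ^ (s / 2)) ^ (1 - q) :=
          Real.rpow_le_rpow_of_nonpos (Real.rpow_pos_of_pos hdet _)
            (abs_det_rpow_le_svf hW.ne_zero hs) (by linarith)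
      _ = _ := by
          rw [← Real.rpow_mul (abs_nonneg _), det_wordProd, Finset.abs_prod,
            Real.finsetProd_rpow _ _ fun j _ => abs_nonneg _]
  rw [Finset.prod_mul_distrib]
  exact mul_le_mul_of_nonneg_right hsvf (prod_pvec_rpow_pos hp w).le

theorem rpow_mul_Zsum_le_Zsum_add (hA : ∀ i, IsUnit (A i)) (hp : p ∈ Set.Ioo (0 : ℝ) 1)
    (hq : 1 ≤ q) {θ : ℝ} (hθ : ∀ i, opNorm (A i) ≤ θ) {t : ℝ} (ht : 0 ≤ t) (n : ℕ) :
    (θ ^ (t * (1 - q))) ^ n * Zsum A p q s n ≤ Zsum A p q (s + t) n := by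
  have hθ0 : 0 < θ := (opNorm_pos (hA 0).ne_zero).trans_le (hθ 0)
  rw [Zsum, Zsum, Finset.mul_sum]
  refine Finset.sum_le_sum fun w _ => ?_
  have hW := isUnit_wordProd hA w
  have hsvf : svf (s + t) (wordProd A w) ≤ svf s (wordProd A w) * (θ ^ n) ^ t :=
    (svf_add_le hW.ne_zero s ht).trans (mul_le_mul_of_nonneg_left
      (Real.rpow_le_rpow (opNorm_pos hW.ne_zero).le (opNorm_wordProd_le hθ w) ht)
      (svf_pos hW s).le)
  have hpow : (θ ^ (t * (1 - q))) ^ n * svf s (wordProd A w) ^ (1 - q)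
      = (svf s (wordProd A w) * (θ ^ n) ^ t) ^ (1 - q) := by
    rw [Real.mul_rpow (svf_pos hW s).le (by positivity), ← Real.rpow_natCast,
      ← Real.rpow_mul hθ0.le, ← Real.rpow_natCast, ← Real.rpow_mul hθ0.le,
      ← Real.rpow_mul hθ0.le, mul_comm]
    ring_nf
  rw [← mul_assoc, hpow]
  exact mul_le_mul_of_nonneg_right
    (Real.rpow_le_rpow_of_nonpos (svf_pos hW _) hsvf (by linarith)) (prod_pvec_rpow_pos hp w).le

end Zsum

section Rq

variable {A : Fin 2 → Mat2} {p q s : ℝ}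

theorem tendsto_Rq (hA : ∀ i, IsUnit (A i)) (hp : p ∈ Set.Ioo (0 : ℝ) 1) (hq : 1 ≤ q)
    (hs : 0 ≤ s) :
    Tendsto (fun n : ℕ => 1 / (n : ℝ) * Real.log (Zsum A p q s n)) atTop (𝓝 (Rq A p q s)) := by
  obtain ⟨L, hL⟩ := exists_tendsto_log_div_of_supermultiplicative (Zsum_pos hA hp)
    (Zsum_mul_le_Zsum_add hA hp hq hs) (Zsum_le_pow hA hp hq hs)
  rwa [Rq, hL.limUnder_eq]

theorem mul_log_add_Rq_le_Rq_add (hA : ∀ i, IsUnit (A i)) (hp : p ∈ Set.Ioo (0 : ℝ) 1)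
    (hq : 1 ≤ q) {θ : ℝ} (hθ : ∀ i, opNorm (A i) ≤ θ) (hs : 0 ≤ s) {t : ℝ} (ht : 0 ≤ t) :
    (1 - q) * t * Real.log θ + Rq A p q s ≤ Rq A p q (s + t) := by
  have hθ0 : 0 < θ := (opNorm_pos (hA 0).ne_zero).trans_le (hθ 0)
  refine le_of_tendsto_of_tendsto ((tendsto_Rq hA hp hq hs).const_add _)
    (tendsto_Rq hA hp hq (by linarith)) ?_
  filter_upwards [eventually_gt_atTop 0] with n hn0
  have hZ := Zsum_pos (q := q) (s := s) hA hp n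
  have hlog := Real.log_le_log (by positivity) (rpow_mul_Zsum_le_Zsum_add hA hp hq hθ ht n)
  rw [Real.log_mul (by positivity) hZ.ne', Real.log_pow, Real.log_rpow hθ0] at hlog
  have hn : (0 : ℝ) < n := Nat.cast_pos.2 hn0
  calc (1 - q) * t * Real.log θ + 1 / (n : ℝ) * Real.log (Zsum A p q s n)
      = 1 / (n : ℝ) * (n * (t * (1 - q) * Real.log θ) + Real.log (Zsum A p q s n)) := by
        field_simp
    _ ≤ 1 / (n : ℝ) * Real.log (Zsum A p q (s + t) n) := by gcongr

end Rq

end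

/-- `s ↦ R_q(A₁,A₂,p,s)` is strictly increasing on `(0,∞)`; indeed with
`θ := max(‖A₁‖,‖A₂‖)` one has `R_q(s+t) ≥ (1−q)·t·log θ + R_q(s) > R_q(s)` for `s, t > 0`. -/
theorem stmt4 (A₁ A₂ : Mat2) (h1 : IsUnit A₁) (h2 : IsUnit A₂)
    (hn1 : opNorm A₁ < 1) (hn2 : opNorm A₂ < 1)
    (q p : ℝ) (hq : 1 < q) (hp : p ∈ Set.Ioo (0 : ℝ) 1) :
    StrictMonoOn (fun s : ℝ => Rq ![A₁, A₂] p q s) (Set.Ioi 0) ∧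
    ∀ s > (0 : ℝ), ∀ t > (0 : ℝ),
      (1 - q) * t * Real.log (max (opNorm A₁) (opNorm A₂)) + Rq ![A₁, A₂] p q s
          ≤ Rq ![A₁, A₂] p q (s + t) ∧
      Rq ![A₁, A₂] p q s < Rq ![A₁, A₂] p q (s + t) := by
  have hA : ∀ i, IsUnit (![A₁, A₂] i) := Fin.forall_fin_two.2 ⟨h1, h2⟩
  have hθ : ∀ i, opNorm (![A₁, A₂] i) ≤ max (opNorm A₁) (opNorm A₂) :=
    Fin.forall_fin_two.2 ⟨le_max_left _ _, le_max_right _ _⟩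
  have hlog : Real.log (max (opNorm A₁) (opNorm A₂)) < 0 :=
    Real.log_neg ((opNorm_pos h1.ne_zero).trans_le (le_max_left _ _)) (max_lt hn1 hn2)
  have hgain : ∀ t > (0 : ℝ), 0 < (1 - q) * t * Real.log (max (opNorm A₁) (opNorm A₂)) :=
    fun t ht => mul_pos_of_neg_of_neg (mul_neg_of_neg_of_pos (by linarith) ht) hlog
  have hineq := fun s (hs : (0 : ℝ) < s) t (ht : (0 : ℝ) < t) =>
    mul_log_add_Rq_le_Rq_add hA hp hq.le hθ hs.le ht.le
  refine ⟨fun s hs s' _ hss' => ?_, fun s hs t ht =>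
    ⟨hineq s hs t ht, by linarith [hineq s hs t ht, hgain t ht]⟩⟩
  have hstep := hineq s hs (s' - s) (sub_pos.2 hss')
  rw [add_sub_cancel] at hstep
  linarith [hgain (s' - s) (sub_pos.2 hss')]

end
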